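/- arXiv:1304.4272 — 7 statements merged into one kernel-verified Lean document; each statement's English description precedes it below -/
import Mathlib

section
/- Let E be the real symmetric block matrix [[A, B, C],[Bᵀ, D, 0],[Cᵀ, 0, 0]], with A and D symmetric. Then the number of negative eigenvalues of E (counted with multiplicity) is at least the number of negative eigenvalues of D plus the rank of C, and likewise the number of positive eigenvalues of E is at least the number of positive eigenvalues of D plus the rank of C. -/
/-- Number of negative eigenvalues (with multiplicity) of a real symmetric matrix. -/
noncomputable def negEigCount {n : Type*} [Fintype n] [DecidableEq n] {M : Matrix n n ℝ}
    (hM : M.IsHermitian) : ℕ :=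
  (Finset.univ.filter fun i => hM.eigenvalues i < 0).card

/-- Number of positive eigenvalues (with multiplicity) of a real symmetric matrix. -/
noncomputable def posEigCount {n : Type*} [Fintype n] [DecidableEq n] {M : Matrix n n ℝ}
    (hM : M.IsHermitian) : ℕ :=
  (Finset.univ.filter fun i => 0 < hM.eigenvalues i).card


open Matrix Finset Module

variable {n : Type*} [Fintype n] [DecidableEq n] {M : Matrix n n ℝ}

lemma dot_eq_inner (x y : EuclideanSpace ℝ n) : x ⬝ᵥ y = inner ℝ x y := by
  simp [dotProduct, PiLp.inner_apply, RCLike.inner_apply, mul_comm]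

lemma spectral_subspace (hM : M.IsHermitian) (p : n → Prop) [DecidablePred p] :
    ∃ V : Submodule ℝ (EuclideanSpace ℝ n),
      finrank ℝ V = (Finset.univ.filter p).card ∧
      ∀ v ∈ V, ∃ cs : n → ℝ,
        (v ⬝ᵥ M *ᵥ v = ∑ i ∈ Finset.univ.filter p, hM.eigenvalues i * cs i ^ 2) ∧
        (v ≠ 0 → ∃ i ∈ Finset.univ.filter p, cs i ≠ 0) := by
  classical
  set b := hM.eigenvectorBasis with hb
  set lam := hM.eigenvalues with hlam
  set T : Submodule ℝ (EuclideanSpace ℝ n) :=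
    Submodule.span ℝ (Set.range fun j : {i // ¬ p i} => b j) with hT
  refine ⟨Tᗮ, ?_, ?_⟩
  · have hli : LinearIndependent ℝ (fun j : {i // ¬ p i} => b j) :=
      b.orthonormal.linearIndependent.comp Subtype.val Subtype.val_injective
    have hT1 : finrank ℝ T = Fintype.card {i // ¬ p i} := finrank_span_eq_card hli
    have h2 : finrank ℝ T + finrank ℝ Tᗮ = finrank ℝ (EuclideanSpace ℝ n) :=
      Submodule.finrank_add_finrank_orthogonal T
    rw [finrank_euclideanSpace] at h2
    have h3 : Fintype.card {i // ¬ p i} = (Finset.univ.filter fun i => ¬ p i).card :=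
      Fintype.card_subtype _
    have h4 := Finset.card_filter_add_card_filter_not (s := (Finset.univ : Finset n)) p
    simp only [Finset.card_univ] at h4
    omega
  · intro v hv
    refine ⟨fun i => inner ℝ (b i) v, ?_, ?_⟩
    · have hzero : ∀ i, ¬ p i → (inner ℝ (b i) v : ℝ) = 0 := by
        intro i hi
        have : b i ∈ T := Submodule.subset_span ⟨⟨i, hi⟩, rfl⟩
        exact hv (b i) this
      have hrep : ∑ i, (inner ℝ (b i) v : ℝ) • b i = v := b.sum_repr' v
      have hMv : M *ᵥ v = WithLp.ofLp (∑ i, ((inner ℝ (b i) v : ℝ) * lam i) • b i) := by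
        have hev : ∀ i, M *ᵥ ⇑(b i) = lam i • ⇑(b i) := hM.mulVec_eigenvectorBasis
        conv_lhs => rw [← hrep]
        simp only [WithLp.ofLp_sum, WithLp.ofLp_smul, Matrix.mulVec_sum, Matrix.mulVec_smul,
          hev, mul_smul]
      have : v ⬝ᵥ M *ᵥ v = ∑ i, lam i * (inner ℝ (b i) v : ℝ) ^ 2 := by
        rw [hMv, dot_eq_inner, inner_sum]
        refine Finset.sum_congr rfl fun i _ => ?_
        rw [real_inner_smul_right, real_inner_comm]
        ring
      rw [this]
      rw [← Finset.sum_filter_of_ne (p := p)]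
      intro i _ hne
      by_contra hpi
      exact hne (by rw [hzero i hpi]; ring)
    · intro hv0
      by_contra hall
      push_neg at hall
      apply hv0
      have hzero : ∀ i, ¬ p i → (inner ℝ (b i) v : ℝ) = 0 := fun i hi =>
        hv (b i) (Submodule.subset_span ⟨⟨i, hi⟩, rfl⟩)
      have : ∀ i, (inner ℝ (b i) v : ℝ) = 0 := by
        intro i
        by_cases hpi : p i
        · exact hall i (Finset.mem_filter.2 ⟨Finset.mem_univ _, hpi⟩)
        · exact hzero i hpi
      calc v = ∑ i, (inner ℝ (b i) v : ℝ) • b i := (b.sum_repr' v).symm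
        _ = 0 := by simp [this]

lemma neg_def_subspace (hM : M.IsHermitian) (σ : ℝ) :
    ∃ V : Submodule ℝ (EuclideanSpace ℝ n),
      finrank ℝ V = (Finset.univ.filter fun i => σ * hM.eigenvalues i < 0).card ∧
      ∀ v ∈ V, v ≠ 0 → σ * (v ⬝ᵥ M *ᵥ v) < 0 := by
  classical
  obtain ⟨V, hdim, hform⟩ := spectral_subspace hM (fun i => σ * hM.eigenvalues i < 0)
  refine ⟨V, hdim, fun v hv hv0 => ?_⟩
  obtain ⟨cs, heq, hex⟩ := hform v hv
  obtain ⟨i0, hi0, hcs0⟩ := hex hv0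
  rw [heq, Finset.mul_sum]
  have hlt : ∑ i ∈ Finset.univ.filter (fun i => σ * hM.eigenvalues i < 0),
      σ * (hM.eigenvalues i * cs i ^ 2)
      < ∑ _i ∈ Finset.univ.filter (fun i => σ * hM.eigenvalues i < 0), (0:ℝ) := by
    apply Finset.sum_lt_sum
    · intro i hi
      have hneg : σ * hM.eigenvalues i < 0 := (Finset.mem_filter.1 hi).2
      have h : σ * (hM.eigenvalues i * cs i ^ 2) = (σ * hM.eigenvalues i) * cs i ^ 2 := by ring
      rw [h]
      exact mul_nonpos_of_nonpos_of_nonneg hneg.le (sq_nonneg _)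
    · refine ⟨i0, hi0, ?_⟩
      have hneg : σ * hM.eigenvalues i0 < 0 := (Finset.mem_filter.1 hi0).2
      have h : σ * (hM.eigenvalues i0 * cs i0 ^ 2) = (σ * hM.eigenvalues i0) * cs i0 ^ 2 := by
        ring
      rw [h]
      exact mul_neg_of_neg_of_pos hneg (by positivity)
  simpa using hlt

lemma finrank_le_count (hM : M.IsHermitian) (σ : ℝ) (W : Submodule ℝ (EuclideanSpace ℝ n))
    (hW : ∀ v ∈ W, v ≠ 0 → σ * (v ⬝ᵥ M *ᵥ v) < 0) :
    finrank ℝ W ≤ (Finset.univ.filter fun i => σ * hM.eigenvalues i < 0).card := by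
  classical
  obtain ⟨V, hdim, hform⟩ := spectral_subspace hM (fun i => ¬ (σ * hM.eigenvalues i < 0))
  by_contra hlt
  push_neg at hlt
  have hcard := Finset.card_filter_add_card_filter_not
    (s := (Finset.univ : Finset n)) (fun i => σ * hM.eigenvalues i < 0)
  simp only [Finset.card_univ] at hcard
  have hsum := Submodule.finrank_sup_add_finrank_inf_eq W V
  have hsup : finrank ℝ ↥(W ⊔ V) ≤ finrank ℝ (EuclideanSpace ℝ n) := Submodule.finrank_le _
  rw [finrank_euclideanSpace] at hsup
  have hpos : 0 < finrank ℝ ↥(W ⊓ V) := by omega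
  have hne : W ⊓ V ≠ ⊥ := by
    intro h
    rw [h, finrank_bot] at hpos
    omega
  obtain ⟨v, hvWV, hvne⟩ := Submodule.exists_mem_ne_zero_of_ne_bot hne
  have hv1 : σ * (v ⬝ᵥ M *ᵥ v) < 0 := hW v (Submodule.mem_inf.1 hvWV).1 hvne
  obtain ⟨cs, heq, -⟩ := hform v (Submodule.mem_inf.1 hvWV).2
  have hv2 : 0 ≤ σ * (v ⬝ᵥ M *ᵥ v) := by
    rw [heq, Finset.mul_sum]
    apply Finset.sum_nonneg
    intro i hi
    have hnn : 0 ≤ σ * hM.eigenvalues i := not_lt.1 (Finset.mem_filter.1 hi).2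
    have h : σ * (hM.eigenvalues i * cs i ^ 2) = (σ * hM.eigenvalues i) * cs i ^ 2 := by ring
    rw [h]
    exact mul_nonneg hnn (sq_nonneg _)
  linarith


lemma dot_eq_inner' {n : Type*} [Fintype n] (x y : EuclideanSpace ℝ n) : x ⬝ᵥ y = inner ℝ x y := by
  simp [dotProduct, PiLp.inner_apply, RCLike.inner_apply, mul_comm]

lemma dot_transpose {a d : ℕ} (B : Matrix (Fin a) (Fin d) ℝ) (x : Fin a → ℝ) (y : Fin d → ℝ) :
    y ⬝ᵥ Bᵀ *ᵥ x = x ⬝ᵥ B *ᵥ y := by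
  rw [Matrix.mulVec_transpose, dotProduct_comm, ← Matrix.dotProduct_mulVec]

lemma bordered_subspace {a d c : ℕ}
    (A : Matrix (Fin a) (Fin a) ℝ) (D : Matrix (Fin d) (Fin d) ℝ)
    (B : Matrix (Fin a) (Fin d) ℝ) (C : Matrix (Fin a) (Fin c) ℝ)
    (σ : ℝ) (hσ : σ ≠ 0)
    (V : Submodule ℝ (EuclideanSpace ℝ (Fin d)))
    (hV : ∀ y ∈ V, y ≠ 0 → σ * (y ⬝ᵥ D *ᵥ y) < 0) :
    ∃ W : Submodule ℝ (EuclideanSpace ℝ (Fin a ⊕ (Fin d ⊕ Fin c))),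
      finrank ℝ W = finrank ℝ V + C.rank ∧
      ∀ v ∈ W, v ≠ 0 →
        σ * (v ⬝ᵥ (Matrix.fromBlocks A (Matrix.fromCols B C) (Matrix.fromCols B C)ᵀ
          (Matrix.fromBlocks D 0 0 0)) *ᵥ v) < 0 := by
  classical
  set R : Submodule ℝ (EuclideanSpace ℝ (Fin a)) := LinearMap.range ((WithLp.linearEquiv 2 ℝ (Fin a → ℝ)).symm.toLinearMap ∘ₗ C.mulVecLin) with hR
  obtain ⟨g, hg⟩ := ((WithLp.linearEquiv 2 ℝ (Fin a → ℝ)).symm.toLinearMap ∘ₗ C.mulVecLin).rangeRestrict.exists_rightInverse_of_surjective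
    (LinearMap.range_rangeRestrict _)
  have hCg : ∀ x : R, C *ᵥ (g x) = (x : Fin a → ℝ) := by
    intro x
    exact congrArg (fun w => WithLp.ofLp (Subtype.val w)) (LinearMap.congr_fun hg x)
  have hπ : ∀ x ∈ R, ∀ w : EuclideanSpace ℝ (Fin a),
      x ⬝ᵥ ((Submodule.orthogonalProjection R w : EuclideanSpace ℝ (Fin a)) : Fin a → ℝ) = x ⬝ᵥ w := by
    intro x hx w
    have hmem := Submodule.sub_starProjection_mem_orthogonal (K := R) w
    have h0 : (inner ℝ x (w - (Submodule.orthogonalProjection R w : EuclideanSpace ℝ (Fin a))) : ℝ) = 0 :=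
      (Submodule.mem_orthogonal R _).1 hmem x hx
    rw [inner_sub_right] at h0
    rw [dot_eq_inner', dot_eq_inner']
    linarith
  let f1 : (V × R) →ₗ[ℝ] (Fin a → ℝ) := (WithLp.linearEquiv 2 ℝ (Fin a → ℝ)).toLinearMap.comp (R.subtype.comp (LinearMap.snd ℝ V R))
  let f2 : (V × R) →ₗ[ℝ] (Fin d → ℝ) := (WithLp.linearEquiv 2 ℝ (Fin d → ℝ)).toLinearMap.comp (V.subtype.comp (LinearMap.fst ℝ V R))
  let h : (V × R) →ₗ[ℝ] (Fin a → ℝ) :=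
    (-(σ/2)) • f1 - (2⁻¹ : ℝ) • (A.mulVecLin.comp f1) - B.mulVecLin.comp f2
  let f3 : (V × R) →ₗ[ℝ] (Fin c → ℝ) :=
    g.comp ((Submodule.orthogonalProjection R).toLinearMap.comp ((WithLp.linearEquiv 2 ℝ (Fin a → ℝ)).symm.toLinearMap.comp h))
  let e1 := LinearEquiv.sumArrowLequivProdArrow (Fin a) (Fin d ⊕ Fin c) ℝ ℝ
  let e2 := LinearEquiv.sumArrowLequivProdArrow (Fin d) (Fin c) ℝ ℝ
  let ψ : (V × R) →ₗ[ℝ] EuclideanSpace ℝ (Fin a ⊕ (Fin d ⊕ Fin c)) :=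
    (WithLp.linearEquiv 2 ℝ ((Fin a ⊕ (Fin d ⊕ Fin c)) → ℝ)).symm.toLinearMap.comp
    (e1.symm.toLinearMap.comp (f1.prod (e2.symm.toLinearMap.comp (f2.prod f3))))
  have hψ : ∀ p : V × R, ψ p = WithLp.toLp 2 (Sum.elim (f1 p) (Sum.elim (f2 p) (f3 p))) := fun p => rfl
  have hinj : Function.Injective ψ := by
    rw [← LinearMap.ker_eq_bot]
    apply LinearMap.ker_eq_bot'.2
    intro p hp
    rw [hψ] at hp
    have hx : (p.2 : Fin a → ℝ) = 0 := funext fun j => congrFun (congrArg WithLp.ofLp hp) (Sum.inl j)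
    have hy : (p.1 : Fin d → ℝ) = 0 := funext fun j => congrFun (congrArg WithLp.ofLp hp) (Sum.inr (Sum.inl j))
    exact Prod.ext (Subtype.ext (WithLp.ofLp_injective 2 hy)) (Subtype.ext (WithLp.ofLp_injective 2 hx))
  refine ⟨LinearMap.range ψ, ?_, ?_⟩
  · exact (LinearMap.finrank_range_of_inj hinj).trans (by rw [Module.finrank_prod, Matrix.rank, hR, LinearMap.range_comp, LinearEquiv.finrank_map_eq])
  · rintro v ⟨p, rfl⟩ hv0
    obtain ⟨y, x⟩ := p
    set x0 : Fin a → ℝ := f1 (y, x) with hx0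
    set y0 : Fin d → ℝ := f2 (y, x) with hy0
    set z0 : Fin c → ℝ := f3 (y, x) with hz0
    have hCz : C *ᵥ z0 = ((Submodule.orthogonalProjection R (WithLp.toLp 2 (h (y, x))) : R) : Fin a → ℝ) :=
      hCg (Submodule.orthogonalProjection R (WithLp.toLp 2 (h (y, x))))
    have hmemR : WithLp.toLp 2 x0 ∈ R := x.2
    have hxw : x0 ⬝ᵥ (C *ᵥ z0) = x0 ⬝ᵥ h (y, x) := by
      rw [hCz]; exact hπ (WithLp.toLp 2 x0) hmemR (WithLp.toLp 2 (h (y, x)))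
    have hh : x0 ⬝ᵥ h (y, x) =
        -(σ/2) * (x0 ⬝ᵥ x0) - 2⁻¹ * (x0 ⬝ᵥ (A *ᵥ x0)) - x0 ⬝ᵥ (B *ᵥ y0) := by
      show x0 ⬝ᵥ ((-(σ/2)) • x0 - (2⁻¹ : ℝ) • (A *ᵥ x0) - B *ᵥ y0) = _
      simp [dotProduct_sub, dotProduct_smul, smul_eq_mul]
    have hq : (Sum.elim x0 (Sum.elim y0 z0)) ⬝ᵥ
        (Matrix.fromBlocks A (Matrix.fromCols B C) (Matrix.fromCols B C)ᵀ
          (Matrix.fromBlocks D 0 0 0)) *ᵥ (Sum.elim x0 (Sum.elim y0 z0))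
        = -σ * (x0 ⬝ᵥ x0) + y0 ⬝ᵥ (D *ᵥ y0) := by
      simp only [Matrix.fromBlocks_mulVec, Sum.elim_comp_inl, Sum.elim_comp_inr,
        Matrix.fromCols_mulVec_sumElim, Matrix.transpose_fromCols, Matrix.fromRows_mulVec,
        Matrix.zero_mulVec, add_zero, zero_add, sumElim_dotProduct_sumElim,
        dotProduct_add, dotProduct_zero]
      rw [dot_transpose B x0 y0, dot_transpose C x0 z0, hxw, hh]
      ring
    have hmemV : WithLp.toLp 2 y0 ∈ V := y.2
    have hpne : x0 ≠ 0 ∨ y0 ≠ 0 := by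
      by_contra hcon
      push_neg at hcon
      apply hv0
      have hz : (⟨y, x⟩ : V × R) = 0 := Prod.ext (Subtype.ext (WithLp.ofLp_injective 2 hcon.2)) (Subtype.ext (WithLp.ofLp_injective 2 hcon.1))
      rw [hz]
      exact map_zero ψ
    have hxx : 0 ≤ x0 ⬝ᵥ x0 := Finset.sum_nonneg fun i _ => mul_self_nonneg _
    have hyD : σ * (y0 ⬝ᵥ D *ᵥ y0) ≤ 0 := by
      by_cases hy' : y0 = 0
      · rw [hy']; simp
      · exact (hV (WithLp.toLp 2 y0) hmemV (fun h0 => hy' (congrArg WithLp.ofLp h0))).le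
    have hσ2 : 0 < σ ^ 2 := by positivity
    have key : σ * ((Sum.elim x0 (Sum.elim y0 z0)) ⬝ᵥ
        (Matrix.fromBlocks A (Matrix.fromCols B C) (Matrix.fromCols B C)ᵀ
          (Matrix.fromBlocks D 0 0 0)) *ᵥ (Sum.elim x0 (Sum.elim y0 z0))) < 0 := by
      rw [hq]
      rcases hpne with hx' | hy'
      · have hxpos : 0 < x0 ⬝ᵥ x0 := by
          rcases lt_or_eq_of_le hxx with hlt | heq
          · exact hlt
          · exact absurd (dotProduct_self_eq_zero.1 heq.symm) hx'
        nlinarith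
      · have hlt : σ * (y0 ⬝ᵥ D *ᵥ y0) < 0 := hV (WithLp.toLp 2 y0) hmemV (fun h0 => hy' (congrArg WithLp.ofLp h0))
        nlinarith
    exact key


theorem inertia_of_bordered_block_matrix (a d c : ℕ)
    (A : Matrix (Fin a) (Fin a) ℝ) (D : Matrix (Fin d) (Fin d) ℝ)
    (B : Matrix (Fin a) (Fin d) ℝ) (C : Matrix (Fin a) (Fin c) ℝ)
    (hA : A.IsHermitian) (hD : D.IsHermitian)
    (E : Matrix (Fin a ⊕ (Fin d ⊕ Fin c)) (Fin a ⊕ (Fin d ⊕ Fin c)) ℝ)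
    (hEdef : E = Matrix.fromBlocks A
      (Matrix.of fun i => Sum.elim (B i) (C i))
      (Matrix.of fun i => Sum.elim (B i) (C i)).transpose
      (Matrix.fromBlocks D 0 0 (0 : Matrix (Fin c) (Fin c) ℝ)))
    (hE : E.IsHermitian) :
    negEigCount hD + C.rank ≤ negEigCount hE ∧
      posEigCount hD + C.rank ≤ posEigCount hE := by
  have hEeq : E = Matrix.fromBlocks A (Matrix.fromCols B C) (Matrix.fromCols B C)ᵀ
      (Matrix.fromBlocks D 0 0 0) := hEdef
  constructor
  · obtain ⟨V, hVdim, hVform⟩ := neg_def_subspace hD 1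
    obtain ⟨W, hWdim, hWform⟩ := bordered_subspace A D B C 1 one_ne_zero V hVform
    have hWform' : ∀ v ∈ W, v ≠ 0 → (1:ℝ) * (v ⬝ᵥ E *ᵥ v) < 0 := by
      intro v hv hv0
      rw [hEeq]
      exact hWform v hv hv0
    have hle := finrank_le_count hE 1 W hWform'
    have e1 : (Finset.univ.filter fun i => (1:ℝ) * hE.eigenvalues i < 0).card
        = negEigCount hE := by
      simp [negEigCount]
    have e2 : (Finset.univ.filter fun i => (1:ℝ) * hD.eigenvalues i < 0).card
        = negEigCount hD := by
      simp [negEigCount]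
    rw [hWdim, hVdim, e2, e1] at hle
    exact hle
  · obtain ⟨V, hVdim, hVform⟩ := neg_def_subspace hD (-1)
    obtain ⟨W, hWdim, hWform⟩ := bordered_subspace A D B C (-1) (by norm_num) V hVform
    have hWform' : ∀ v ∈ W, v ≠ 0 → (-1:ℝ) * (v ⬝ᵥ E *ᵥ v) < 0 := by
      intro v hv hv0
      rw [hEeq]
      exact hWform v hv hv0
    have hle := finrank_le_count hE (-1) W hWform'
    have e1 : (Finset.univ.filter fun i => (-1:ℝ) * hE.eigenvalues i < 0).card
        = posEigCount hE := by
      simp [posEigCount, neg_mul, one_mul, neg_lt_zero]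
    have e2 : (Finset.univ.filter fun i => (-1:ℝ) * hD.eigenvalues i < 0).card
        = posEigCount hD := by
      simp [posEigCount, neg_mul, one_mul, neg_lt_zero]
    rw [hWdim, hVdim, e2, e1] at hle
    exact hle
end

section
/- For the real symmetric block matrix F = [[A, C],[Cᵀ, 0]] with A symmetric, both the number of negative eigenvalues of F and the number of positive eigenvalues of F (counted with multiplicity) are at least the rank of C. -/
open Matrix

/-- Quadratic form in terms of eigenvalues. -/
lemma inertia_quad_expand {n : Type*} [Fintype n] [DecidableEq n] {M : Matrix n n ℝ}
    (hM : M.IsHermitian) (x : n → ℝ) :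
    x ⬝ᵥ (M *ᵥ x) = ∑ i, hM.eigenvalues i *
      ((star (hM.eigenvectorUnitary : Matrix n n ℝ) *ᵥ x) i)^2 := by
  set U : Matrix n n ℝ := (hM.eigenvectorUnitary : Matrix n n ℝ) with hU
  conv_lhs => rw [hM.spectral_theorem, Unitary.conjStarAlgAut_apply]
  rw [← Matrix.mulVec_mulVec, ← Matrix.mulVec_mulVec, Matrix.dotProduct_mulVec x U]
  have hsU : star U = Uᵀ := by
    ext i j
    simp [Matrix.star_apply]
  have hvm : x ᵥ* U = star U *ᵥ x := by
    rw [hsU, Matrix.mulVec_transpose]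
  rw [hvm]
  simp only [dotProduct, Matrix.mulVec_diagonal]
  refine Finset.sum_congr rfl fun i _ => ?_
  simp [RCLike.ofReal]
  ring

lemma key_count_pos {n : Type*} [Fintype n] [DecidableEq n] {M : Matrix n n ℝ}
    (hM : M.IsHermitian) (W : Submodule ℝ (n → ℝ)) (s : Finset n)
    (hs : ∀ i, i ∉ s → hM.eigenvalues i ≤ 0)
    (hq : ∀ x ∈ W, x ≠ 0 → 0 < x ⬝ᵥ (M *ᵥ x)) :
    Module.finrank ℝ W ≤ s.card := by
  classical
  set U : Matrix n n ℝ := (hM.eigenvectorUnitary : Matrix n n ℝ) with hU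
  set φ : (n → ℝ) →ₗ[ℝ] ({i // i ∈ s} → ℝ) :=
    (LinearMap.funLeft ℝ ℝ (Subtype.val)).comp (Matrix.mulVecLin (star U)) with hφ
  have hinj : Function.Injective (φ.domRestrict W) := by
    rw [← LinearMap.ker_eq_bot, LinearMap.ker_eq_bot']
    rintro ⟨x, hx⟩ h0
    have h0' : ∀ i (hi : i ∈ s), (star U *ᵥ x) i = 0 := by
      intro i hi
      simpa [φ, Matrix.mulVecLin] using congrFun h0 ⟨i, hi⟩
    ext1
    by_contra hxne
    have hpos := hq x hx (by simpa using hxne)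
    rw [inertia_quad_expand hM x] at hpos
    refine absurd hpos (not_lt.2 ?_)
    refine Finset.sum_nonpos fun i _ => ?_
    by_cases hi : i ∈ s
    · rw [h0' i hi]
      simp
    · exact mul_nonpos_of_nonpos_of_nonneg (hs i hi) (sq_nonneg _)
  calc Module.finrank ℝ W ≤ Module.finrank ℝ ({i // i ∈ s} → ℝ) :=
        LinearMap.finrank_le_finrank_of_injective hinj
    _ = s.card := by simp [Module.finrank_pi]

lemma key_count_neg {n : Type*} [Fintype n] [DecidableEq n] {M : Matrix n n ℝ}
    (hM : M.IsHermitian) (W : Submodule ℝ (n → ℝ)) (s : Finset n)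
    (hs : ∀ i, i ∉ s → 0 ≤ hM.eigenvalues i)
    (hq : ∀ x ∈ W, x ≠ 0 → x ⬝ᵥ (M *ᵥ x) < 0) :
    Module.finrank ℝ W ≤ s.card := by
  classical
  set U : Matrix n n ℝ := (hM.eigenvectorUnitary : Matrix n n ℝ) with hU
  set φ : (n → ℝ) →ₗ[ℝ] ({i // i ∈ s} → ℝ) :=
    (LinearMap.funLeft ℝ ℝ (Subtype.val)).comp (Matrix.mulVecLin (star U)) with hφ
  have hinj : Function.Injective (φ.domRestrict W) := by
    rw [← LinearMap.ker_eq_bot, LinearMap.ker_eq_bot']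
    rintro ⟨x, hx⟩ h0
    have h0' : ∀ i (hi : i ∈ s), (star U *ᵥ x) i = 0 := by
      intro i hi
      simpa [φ, Matrix.mulVecLin] using congrFun h0 ⟨i, hi⟩
    ext1
    by_contra hxne
    have hneg := hq x hx (by simpa using hxne)
    rw [inertia_quad_expand hM x] at hneg
    refine absurd hneg (not_lt.2 ?_)
    refine Finset.sum_nonneg fun i _ => ?_
    by_cases hi : i ∈ s
    · rw [h0' i hi]
      simp
    · exact mul_nonneg (hs i hi) (sq_nonneg _)
  calc Module.finrank ℝ W ≤ Module.finrank ℝ ({i // i ∈ s} → ℝ) :=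
        LinearMap.finrank_le_finrank_of_injective hinj
    _ = s.card := by simp [Module.finrank_pi]

lemma quad_bound {a : ℕ} (A : Matrix (Fin a) (Fin a) ℝ) (y : Fin a → ℝ) :
    |y ⬝ᵥ (A *ᵥ y)| ≤ (∑ i, ∑ j, |A i j|) * (y ⬝ᵥ y) := by
  have hq : y ⬝ᵥ y = ∑ k, y k ^ 2 := by simp [dotProduct, sq]
  have hterm : ∀ i j : Fin a, |y i * y j| ≤ y ⬝ᵥ y := by
    intro i j
    have h1 : y i ^ 2 ≤ y ⬝ᵥ y := by
      rw [hq]; exact Finset.single_le_sum (fun k _ => sq_nonneg (y k)) (Finset.mem_univ i)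
    have h2 : y j ^ 2 ≤ y ⬝ᵥ y := by
      rw [hq]; exact Finset.single_le_sum (fun k _ => sq_nonneg (y k)) (Finset.mem_univ j)
    have habs : |y i * y j| = |y i| * |y j| := abs_mul _ _
    nlinarith [sq_nonneg (|y i| - |y j|), sq_abs (y i), sq_abs (y j),
      abs_nonneg (y i), abs_nonneg (y j)]
  have hexp : y ⬝ᵥ (A *ᵥ y) = ∑ i, ∑ j, A i j * (y i * y j) := by
    simp only [dotProduct, Matrix.mulVec, Finset.mul_sum]
    refine Finset.sum_congr rfl fun i _ => Finset.sum_congr rfl fun j _ => by ring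
  rw [hexp]
  calc |∑ i, ∑ j, A i j * (y i * y j)| ≤ ∑ i, |∑ j, A i j * (y i * y j)| :=
        Finset.abs_sum_le_sum_abs _ _
    _ ≤ ∑ i, ∑ j, |A i j * (y i * y j)| :=
        Finset.sum_le_sum fun i _ => Finset.abs_sum_le_sum_abs _ _
    _ ≤ ∑ i, ∑ j, |A i j| * (y ⬝ᵥ y) := by
        refine Finset.sum_le_sum fun i _ => Finset.sum_le_sum fun j _ => ?_
        rw [abs_mul]
        exact mul_le_mul_of_nonneg_left (hterm i j) (abs_nonneg _)
    _ = (∑ i, ∑ j, |A i j|) * (y ⬝ᵥ y) := by rw [Finset.sum_mul]; simp [Finset.sum_mul]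

/-- The embedding `v ↦ (t • C v, v)`. -/
noncomputable def embMap {a c : ℕ} (C : Matrix (Fin a) (Fin c) ℝ) (t : ℝ) :
    (Fin c → ℝ) →ₗ[ℝ] (Fin a ⊕ Fin c → ℝ) where
  toFun v := Sum.elim (t • (C *ᵥ v)) v
  map_add' v w := by
    funext i
    cases i <;> simp [Matrix.mulVec_add, smul_add]
  map_smul' r v := by
    funext i
    cases i <;> simp [Matrix.mulVec_smul, smul_comm t r]

theorem inertia_bound_rank (a c : ℕ)
    (A : Matrix (Fin a) (Fin a) ℝ) (C : Matrix (Fin a) (Fin c) ℝ)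
    (hA : A.IsHermitian)
    (F : Matrix (Fin a ⊕ Fin c) (Fin a ⊕ Fin c) ℝ)
    (hFdef : F = Matrix.fromBlocks A C C.transpose (0 : Matrix (Fin c) (Fin c) ℝ))
    (hF : F.IsHermitian) :
    C.rank ≤ negEigCount hF ∧ C.rank ≤ posEigCount hF := by
  classical
  -- basis of the range of C
  let b : Module.Basis (Fin C.rank) ℝ (LinearMap.range C.mulVecLin) :=
    Module.finBasisOfFinrankEq ℝ _ rfl
  choose u hu using fun j => (b j).2
  have huC' : ∀ j, C *ᵥ u j = ↑(b j) := by
    intro j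
    rw [← Matrix.mulVecLin_apply, hu]
  have hbli : LinearIndependent ℝ (fun j => ((b j : _) : Fin a → ℝ)) :=
    b.linearIndependent.map' (Submodule.subtype _) (Submodule.ker_subtype _)
  have huC : LinearIndependent ℝ (fun j => C *ᵥ u j) := by
    have : (fun j => C *ᵥ u j) = fun j => ((b j : _) : Fin a → ℝ) := funext huC'
    rw [this]
    exact hbli
  have hui : LinearIndependent ℝ u := by
    refine LinearIndependent.of_comp C.mulVecLin ?_
    have : (C.mulVecLin ∘ u) = fun j => C *ᵥ u j := by
      funext j; simp [Matrix.mulVecLin_apply]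
    rw [this]
    exact huC
  set Usub : Submodule ℝ (Fin c → ℝ) := Submodule.span ℝ (Set.range u) with hUsub
  have hUrank : Module.finrank ℝ Usub = C.rank := by
    rw [hUsub, finrank_span_eq_card hui]
    simp
  -- injectivity of C on Usub
  have hCinj : ∀ v ∈ Usub, C *ᵥ v = 0 → v = 0 := by
    intro v hv h0
    obtain ⟨g, hg⟩ := (Submodule.mem_span_range_iff_exists_fun ℝ).1 hv
    have h0' : ∑ j, g j • (C *ᵥ u j) = 0 := by
      have : C.mulVecLin (∑ j, g j • u j) = 0 := by
        rw [hg]; simp [Matrix.mulVecLin_apply, h0]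
      rw [map_sum] at this
      simpa [Matrix.mulVecLin_apply] using this
    have hg0 : ∀ j, g j = 0 := Fintype.linearIndependent_iff.1 huC g h0'
    rw [← hg]
    simp [hg0]
  -- quadratic form evaluation
  have hFq : ∀ (t : ℝ) (v : Fin c → ℝ),
      (Sum.elim (t • (C *ᵥ v)) v) ⬝ᵥ (F *ᵥ (Sum.elim (t • (C *ᵥ v)) v)) =
        t^2 * ((C *ᵥ v) ⬝ᵥ (A *ᵥ (C *ᵥ v))) + 2*t*((C *ᵥ v) ⬝ᵥ (C *ᵥ v)) := by
    intro t v
    rw [hFdef, Matrix.fromBlocks_mulVec, sumElim_dotProduct_sumElim]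
    have e2 : v ⬝ᵥ (Cᵀ *ᵥ (C *ᵥ v)) = (C *ᵥ v) ⬝ᵥ (C *ᵥ v) := by
      rw [Matrix.dotProduct_mulVec, Matrix.vecMul_transpose]
    simp only [Sum.elim_comp_inl, Sum.elim_comp_inr, Matrix.zero_mulVec, add_zero,
      dotProduct_add, smul_dotProduct, dotProduct_smul,
      Matrix.mulVec_smul, e2, smul_eq_mul]
    ring
  set K : ℝ := ∑ i, ∑ j, |A i j| with hK
  have hK0 : 0 ≤ K :=
    Finset.sum_nonneg fun i _ => Finset.sum_nonneg fun j _ => abs_nonneg _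
  set ε : ℝ := 1 / (K + 1) with hε
  have hε0 : 0 < ε := by positivity
  have hεK : ε * K < 1 := by
    rw [hε, div_mul_eq_mul_div, div_lt_one (by linarith)]
    linarith
  -- the general subspace argument for a given t
  have hmain : ∀ t : ℝ, t ≠ 0 →
      Module.finrank ℝ (Usub.map (embMap C t)) = C.rank ∧
      (∀ x ∈ Usub.map (embMap C t), x ≠ 0 →
        ∃ v, v ∈ Usub ∧ x = Sum.elim (t • (C *ᵥ v)) v ∧ 0 < (C *ᵥ v) ⬝ᵥ (C *ᵥ v) ∧
          |(C *ᵥ v) ⬝ᵥ (A *ᵥ (C *ᵥ v))| ≤ K * ((C *ᵥ v) ⬝ᵥ (C *ᵥ v))) := by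
    intro t ht
    have hLinj : Function.Injective (embMap C t) := by
      intro v w h
      funext i
      exact congrFun h (Sum.inr i)
    constructor
    · rw [← hUrank]
      exact (Submodule.equivMapOfInjective (embMap C t) hLinj Usub).finrank_eq.symm
    · rintro x hx hxne
      obtain ⟨v, hv, rfl⟩ := Submodule.mem_map.1 hx
      have hvne : v ≠ 0 := by
        rintro rfl
        exact hxne (map_zero _)
      have hCv : C *ᵥ v ≠ 0 := fun h0 => hvne (hCinj v hv h0)
      have hd0 : 0 ≤ (C *ᵥ v) ⬝ᵥ (C *ᵥ v) :=
        Finset.sum_nonneg fun k _ => mul_self_nonneg _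
      have hdne : (C *ᵥ v) ⬝ᵥ (C *ᵥ v) ≠ 0 :=
        fun h0 => hCv (dotProduct_self_eq_zero.mp h0)
      exact ⟨v, hv, rfl, lt_of_le_of_ne hd0 (Ne.symm hdne), quad_bound A (C *ᵥ v)⟩
  constructor
  · -- negative eigenvalues: use t = -ε
    obtain ⟨hrank, hrep⟩ := hmain (-ε) (by linarith)
    have := key_count_neg hF (Usub.map (embMap C (-ε)))
      (Finset.univ.filter fun i => hF.eigenvalues i < 0)
      (by intro i hi; simp only [Finset.mem_filter, Finset.mem_univ, true_and] at hi; linarith [not_lt.1 hi])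
      ?_
    · rw [hrank] at this
      exact this
    · intro x hx hxne
      obtain ⟨v, hv, rfl, hd, hb⟩ := hrep x hx hxne
      rw [hFq (-ε) v]
      have hsb := abs_le.1 hb
      nlinarith [mul_pos hε0 hd, mul_pos (mul_pos hε0 hε0) hd,
        mul_lt_mul_of_pos_right hεK (mul_pos hε0 hd)]
  · -- positive eigenvalues: use t = ε
    obtain ⟨hrank, hrep⟩ := hmain ε (by linarith)
    have := key_count_pos hF (Usub.map (embMap C ε))
      (Finset.univ.filter fun i => 0 < hF.eigenvalues i)
      (by intro i hi; simp only [Finset.mem_filter, Finset.mem_univ, true_and] at hi; linarith [not_lt.1 hi])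
      ?_
    · rw [hrank] at this
      exact this
    · intro x hx hxne
      obtain ⟨v, hv, rfl, hd, hb⟩ := hrep x hx hxne
      rw [hFq ε v]
      have hsb := abs_le.1 hb
      nlinarith [mul_pos hε0 hd, mul_pos (mul_pos hε0 hε0) hd,
        mul_lt_mul_of_pos_right hεK (mul_pos hε0 hd)]
end

section
/- Let n > d and let z₁, …, z_d be linearly independent vectors in ℝⁿ. The linear map Φ from the space of real symmetric n×n matrices to ℝ^{nd} sending H to the stacked vector (Hz₁, Hz₂, …, Hz_d) has image of codimension exactly d(d−1)/2; in particular this codimension is independent of n. -/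
/-- The subspace of symmetric `n × n` real matrices. -/
def symmetricMatrices (n : ℕ) : Submodule ℝ (Matrix (Fin n) (Fin n) ℝ) where
  carrier := {H | H.IsSymm}
  add_mem' := fun hX hY => Matrix.IsSymm.add hX hY
  zero_mem' := Matrix.isSymm_zero
  smul_mem' := fun c _ hX => Matrix.IsSymm.smul hX c

open Matrix Finset

noncomputable section CHSYAux

/-- pairs `i < j` in `Fin d` are in bijection with `Σ j, Fin j`. -/
def chsyPairEquiv (d : ℕ) : {p : Fin d × Fin d // p.1 < p.2} ≃ (Σ j : Fin d, Fin (j : ℕ)) where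
  toFun p := ⟨p.1.2, ⟨p.1.1, p.2⟩⟩
  invFun x := ⟨(⟨x.2, x.2.isLt.trans x.1.isLt⟩, x.1), x.2.isLt⟩
  left_inv := by rintro ⟨⟨i, j⟩, h⟩; rfl
  right_inv := by rintro ⟨j, k⟩; rfl

lemma chsyPairCard (d : ℕ) :
    Fintype.card {p : Fin d × Fin d // p.1 < p.2} = d * (d - 1) / 2 := by
  rw [Fintype.card_congr (chsyPairEquiv d)]
  simp only [Fintype.card_sigma, Fintype.card_fin]
  rw [Fin.sum_univ_eq_sum_range (fun i => i) d, Finset.sum_range_id]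

variable {n d : ℕ}

/-- The skew-symmetry defect map. -/
def chsyPsi (z : Fin d → Fin n → ℝ) :
    (Fin d → Fin n → ℝ) →ₗ[ℝ] ({p : Fin d × Fin d // p.1 < p.2} → ℝ) where
  toFun y p := y p.1.1 ⬝ᵥ z p.1.2 - y p.1.2 ⬝ᵥ z p.1.1
  map_add' y₁ y₂ := by
    funext p
    simp [add_dotProduct]
    ring
  map_smul' c y := by
    funext p
    simp [smul_dotProduct]
    ring

lemma chsy_exists_dual (z : Fin d → Fin n → ℝ) (hz : LinearIndependent ℝ z) :
    ∃ w : Fin d → Fin n → ℝ, ∀ i j, w i ⬝ᵥ z j = if i = j then 1 else 0 := by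
  set G : Matrix (Fin d) (Fin d) ℝ := Matrix.of fun i j => z i ⬝ᵥ z j with hGdef
  have hG : IsUnit G := by
    rw [← Matrix.mulVec_injective_iff_isUnit]
    intro a b hab
    have hab0 : G.mulVec (a - b) = 0 := by
      rw [Matrix.mulVec_sub, hab, sub_self]
    suffices h : a - b = 0 by
      have := sub_eq_zero.mp h; exact this
    set c : Fin d → ℝ := a - b with hc
    have key : ∀ u : Fin n → ℝ, (∑ j, c j • z j) ⬝ᵥ u = ∑ j, c j * (z j ⬝ᵥ u) := by
      intro u
      simp only [dotProduct, Finset.sum_apply, Pi.smul_apply, smul_eq_mul,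
        Finset.sum_mul, Finset.mul_sum, mul_assoc]
      rw [Finset.sum_comm]
    have hu : (∑ j, c j • z j) = 0 := by
      have hself : (∑ j, c j • z j) ⬝ᵥ (∑ j, c j • z j) = 0 := by
        rw [key]
        refine Finset.sum_eq_zero fun i _ => ?_
        have hz' : z i ⬝ᵥ (∑ j, c j • z j) = (G *ᵥ c) i := by
          rw [dotProduct_comm, key]
          have h0 : (G *ᵥ c) i = ∑ j, (z i ⬝ᵥ z j) * c j := rfl
          rw [h0]
          exact Finset.sum_congr rfl fun j _ => by
            rw [dotProduct_comm (z j) (z i)]; ring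
        rw [hz', hab0]
        simp
      exact dotProduct_self_eq_zero.mp hself
    have := Fintype.linearIndependent_iff.mp hz c hu
    funext i; exact this i
  have hGdet : IsUnit G.det := (Matrix.isUnit_iff_isUnit_det G).mp hG
  refine ⟨fun i x => ∑ k, G⁻¹ i k * z k x, fun i j => ?_⟩
  have : (fun x => ∑ k, G⁻¹ i k * z k x) ⬝ᵥ z j = ∑ k, G⁻¹ i k * (z k ⬝ᵥ z j) := by
    simp only [dotProduct, Finset.sum_mul, Finset.mul_sum, mul_assoc]
    rw [Finset.sum_comm]
  rw [this]
  have hinv := Matrix.nonsing_inv_mul G hGdet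
  have : (∑ k, G⁻¹ i k * (z k ⬝ᵥ z j)) = (G⁻¹ * G) i j := by
    simp [Matrix.mul_apply, hGdef]
  rw [this, hinv, Matrix.one_apply]

lemma chsy_dot_comb {w z : Fin d → Fin n → ℝ}
    (hw : ∀ i j, w i ⬝ᵥ z j = if i = j then 1 else 0)
    (g : Fin d → ℝ) (j : Fin d) :
    (fun x => ∑ k, g k * w k x) ⬝ᵥ z j = g j := by
  have : (fun x => ∑ k, g k * w k x) ⬝ᵥ z j = ∑ k, g k * (w k ⬝ᵥ z j) := by
    simp only [dotProduct, Finset.sum_mul, Finset.mul_sum, mul_assoc]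
    rw [Finset.sum_comm]
  rw [this]
  simp_rw [hw]
  simp

end CHSYAux

theorem codim_of_CHSY_map_one (n d : ℕ) (hnd : d < n)
    (z : Fin d → (Fin n → ℝ)) (hz : LinearIndependent ℝ z)
    (Φ : symmetricMatrices n →ₗ[ℝ] (Fin d → Fin n → ℝ))
    (hΦ : ∀ (H : symmetricMatrices n) (j : Fin d),
      Φ H j = Matrix.mulVec (H : Matrix (Fin n) (Fin n) ℝ) (z j)) :
    n * d - Module.finrank ℝ (LinearMap.range Φ) = d * (d - 1) / 2 := by
  classical
  obtain ⟨w, hw⟩ := chsy_exists_dual z hz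
  -- range Φ = ker (chsyPsi z)
  have hrange : LinearMap.range Φ = LinearMap.ker (chsyPsi z) := by
    apply le_antisymm
    · rintro y ⟨H, rfl⟩
      obtain ⟨M, hM⟩ := H
      have hsym : ∀ u v : Fin n → ℝ, M.mulVec u ⬝ᵥ v = u ⬝ᵥ M.mulVec v := by
        intro u v
        rw [Matrix.dotProduct_mulVec u M v, ← Matrix.mulVec_transpose, hM,
          dotProduct_comm]
      rw [LinearMap.mem_ker]
      funext p
      obtain ⟨⟨i, j⟩, hij⟩ := p
      show (Φ ⟨M, hM⟩) i ⬝ᵥ z j - (Φ ⟨M, hM⟩) j ⬝ᵥ z i = 0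
      rw [hΦ ⟨M, hM⟩ i, hΦ ⟨M, hM⟩ j]
      rw [hsym (z i) (z j), dotProduct_comm]
      ring
    · intro y hy
      rw [LinearMap.mem_ker] at hy
      set c : Fin d → Fin d → ℝ := fun i j => y i ⬝ᵥ z j with hc
      have hcsymm : ∀ i j, c i j = c j i := by
        intro i j
        rcases lt_trichotomy i j with h | h | h
        · have := congrFun hy ⟨(i, j), h⟩
          simpa [chsyPsi, sub_eq_zero, hc] using this
        · rw [h]
        · have := congrFun hy ⟨(j, i), h⟩
          have h2 : c j i - c i j = 0 := by simpa [chsyPsi, hc] using this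
          linarith
      set M : Matrix (Fin n) (Fin n) ℝ := Matrix.of fun a b =>
        (∑ j, (y j a * w j b + w j a * y j b)) - ∑ i, ∑ j, c i j * (w i a * w j b)
        with hMdef
      have hMsymm : M.IsSymm := by
        rw [Matrix.IsSymm]
        ext a b
        show M b a = M a b
        simp only [hMdef, Matrix.of_apply]
        congr 1
        · refine Finset.sum_congr rfl fun j _ => ?_; ring
        · rw [Finset.sum_comm]
          refine Finset.sum_congr rfl fun i _ => Finset.sum_congr rfl fun j _ => ?_
          rw [hcsymm j i]; ring
      have hMz : ∀ k, M.mulVec (z k) = y k := by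
        intro k
        funext a
        show (∑ b, M a b * z k b) = y k a
        have expand : ∀ b, M a b * z k b =
            (∑ j, (y j a * (w j b * z k b) + w j a * (y j b * z k b))) -
            ∑ i, ∑ j, c i j * w i a * (w j b * z k b) := by
          intro b
          simp only [hMdef, Matrix.of_apply, sub_mul, Finset.sum_mul]
          congr 1
          · refine Finset.sum_congr rfl fun j _ => ?_; ring
          · refine Finset.sum_congr rfl fun i _ =>
              Finset.sum_congr rfl fun j _ => by ring
        simp_rw [expand]
        rw [Finset.sum_sub_distrib]
        have h1 : (∑ b, ∑ j, (y j a * (w j b * z k b) + w j a * (y j b * z k b)))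
            = ∑ j, (y j a * (w j ⬝ᵥ z k) + w j a * (y j ⬝ᵥ z k)) := by
          rw [Finset.sum_comm]
          refine Finset.sum_congr rfl fun j _ => ?_
          rw [Finset.sum_add_distrib, ← Finset.mul_sum, ← Finset.mul_sum]
          rfl
        have h2 : (∑ b, ∑ i, ∑ j, c i j * w i a * (w j b * z k b))
            = ∑ i, ∑ j, c i j * w i a * (w j ⬝ᵥ z k) := by
          rw [Finset.sum_comm]
          refine Finset.sum_congr rfl fun i _ => ?_
          rw [Finset.sum_comm]
          refine Finset.sum_congr rfl fun j _ => ?_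
          rw [← Finset.mul_sum]
          rfl
        rw [h1, h2]
        simp_rw [hw]
        simp only [mul_ite, mul_one, mul_zero]
        rw [Finset.sum_add_distrib]
        rw [Finset.sum_ite_eq' Finset.univ k (fun j => y j a)]
        simp only [Finset.mem_univ, if_true]
        have h3 : (∑ i, ∑ j, if j = k then c i j * w i a else 0)
            = ∑ i, c i k * w i a := by
          refine Finset.sum_congr rfl fun i _ => ?_
          rw [Finset.sum_ite_eq' Finset.univ k (fun j => c i j * w i a)]
          simp
        rw [h3]
        have h4 : (∑ j, if j = k then w j a else 0) = w k a := by
          rw [Finset.sum_ite_eq' Finset.univ k (fun j => w j a)]; simp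
        have h5 : ∀ j, w j a * (y j ⬝ᵥ z k) = c j k * w j a := by
          intro j; rw [hc]; ring
        simp_rw [h5]
        ring
      refine ⟨⟨M, hMsymm⟩, ?_⟩
      funext k
      rw [hΦ ⟨M, hMsymm⟩ k]
      exact hMz k
  -- (chsyPsi z) is surjective
  have hsurj : Function.Surjective (chsyPsi z) := by
    intro t
    set aco : Fin d → Fin d → ℝ := fun i k => if h : i < k then t ⟨(i, k), h⟩ else 0
      with haco
    refine ⟨fun i x => ∑ k, aco i k * w k x, ?_⟩
    funext p
    obtain ⟨⟨i, j⟩, hij⟩ := p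
    show (fun x => ∑ k, aco i k * w k x) ⬝ᵥ z j
        - (fun x => ∑ k, aco j k * w k x) ⬝ᵥ z i = t ⟨(i, j), hij⟩
    rw [chsy_dot_comb hw (aco i) j, chsy_dot_comb hw (aco j) i]
    have h1 : aco i j = t ⟨(i, j), hij⟩ := by simp [haco, hij]
    have h2 : aco j i = 0 := by
      have : ¬ j < i := not_lt.mpr (le_of_lt hij)
      simp [haco, this]
    rw [h1, h2, sub_zero]
  -- dimension count
  have hrn := LinearMap.finrank_range_add_finrank_ker (chsyPsi z)
  have hdom : Module.finrank ℝ (Fin d → Fin n → ℝ) = d * n := by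
    rw [Module.finrank_pi_fintype ℝ]
    simp [Module.finrank_pi]
  have htop : LinearMap.range (chsyPsi z) = ⊤ := LinearMap.range_eq_top.mpr hsurj
  have hrank : Module.finrank ℝ (LinearMap.range (chsyPsi z)) = d * (d - 1) / 2 := by
    rw [htop, finrank_top]
    rw [Module.finrank_pi]
    exact chsyPairCard d
  rw [hrange]
  rw [hdom, hrank] at hrn
  have hmul : n * d = d * n := Nat.mul_comm n d
  omega
end

section
/- Let n > d, let z₁, …, z_d be linearly independent in ℝⁿ, and let g be a positive integer. The linear map from g-tuples of real symmetric n×n matrices H = (H₁,…,H_g) to ℝ^{gnd} sending H to the concatenation over j = 1,…,g of (H_j z₁, …, H_j z_d) has image of codimension g·d(d−1)/2, independent of n. -/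
open Matrix

lemma dot_sum_mul {n d : ℕ} (w : Fin d → Fin n → ℝ) (cc : Fin d → ℝ) (v : Fin n → ℝ) :
    v ⬝ᵥ (fun a => ∑ k, cc k * w k a) = ∑ k, cc k * (v ⬝ᵥ w k) := by
  simp only [dotProduct, Finset.mul_sum]
  rw [Finset.sum_comm]
  exact Finset.sum_congr rfl fun k _ => Finset.sum_congr rfl fun a _ => by ring

lemma symm_dot {n : ℕ} {A : Matrix (Fin n) (Fin n) ℝ} (hA : A.IsSymm) (u v : Fin n → ℝ) :
    u ⬝ᵥ (A *ᵥ v) = v ⬝ᵥ (A *ᵥ u) := by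
  simp only [dotProduct, mulVec, Finset.mul_sum]
  rw [Finset.sum_comm]
  refine Finset.sum_congr rfl fun a _ => Finset.sum_congr rfl fun b _ => ?_
  rw [hA.apply a b]
  ring

lemma exists_dual {n d : ℕ} (z : Fin d → (Fin n → ℝ)) (hz : LinearIndependent ℝ z) :
    ∃ w : Fin d → Fin n → ℝ, ∀ i j, z j ⬝ᵥ w i = if i = j then 1 else 0 := by
  set p := Submodule.span ℝ (Set.range z) with hp
  let b : Module.Basis (Fin d) ℝ p := Module.Basis.span hz
  have hext : ∀ i : Fin d, ∃ f : (Fin n → ℝ) →ₗ[ℝ] ℝ, f ∘ₗ p.subtype = b.coord i :=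
    fun i => LinearMap.exists_extend (b.coord i)
  choose f hf using hext
  refine ⟨fun i k => f i (Pi.single k 1), fun i j => ?_⟩
  have h1 : ∀ v : Fin n → ℝ, v ⬝ᵥ (fun k => f i (Pi.single k 1)) = f i v := by
    intro v
    have hv : f i v = f i (∑ k, Pi.single k (v k)) := by rw [Finset.univ_sum_single]
    rw [hv, map_sum]
    simp only [dotProduct]
    refine Finset.sum_congr rfl fun k _ => ?_
    have : Pi.single (M := fun _ : Fin n => ℝ) k (v k) = v k • (Pi.single k (1:ℝ) : Fin n → ℝ) := by
      ext a
      by_cases h : a = k <;> simp [Pi.single_apply, h]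
    rw [this, LinearMap.map_smul, smul_eq_mul]
  rw [h1]
  have hzj : z j = p.subtype (b j) := by
    simp only [Submodule.subtype_apply, b]
    exact congrArg Subtype.val (Module.Basis.span_apply hz j).symm
  rw [hzj, ← LinearMap.comp_apply, hf, Module.Basis.coord_apply, Module.Basis.repr_self]
  simp [Finsupp.single_apply, eq_comm]

/-- index type for strictly-lower pairs -/
abbrev Spairs (d : ℕ) := (i : Fin d) × Fin i.val

lemma card_Spairs (d : ℕ) : Fintype.card (Spairs d) = d * (d - 1) / 2 := by
  rw [Fintype.card_sigma]
  simp only [Fintype.card_fin]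
  rw [Fin.sum_univ_eq_sum_range (fun i => i) d]
  exact Finset.sum_range_id d

lemma finrank_fun (ι : Type) [Fintype ι] (M : Type) [AddCommGroup M] [Module ℝ M]
    [Module.Free ℝ M] [Module.Finite ℝ M] :
    Module.finrank ℝ (ι → M) = Fintype.card ι * Module.finrank ℝ M := by
  rw [Module.finrank_pi_fintype ℝ, Finset.sum_const, Finset.card_univ, smul_eq_mul]

/-- The CHSY Lemma: codimension of the range of the map
`(H₁,…,H_g) ↦ (Hⱼ zᵢ)` on tuples of symmetric matrices. -/
theorem CHSY_lemma (n d g : ℕ) (hnd : d < n) (hg : 0 < g)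
    (z : Fin d → (Fin n → ℝ)) (hz : LinearIndependent ℝ z)
    (Φ : (Fin g → symmetricMatrices n) →ₗ[ℝ] (Fin g → Fin d → Fin n → ℝ))
    (hΦ : ∀ (H : Fin g → symmetricMatrices n) (j : Fin g) (i : Fin d),
      Φ H j i = Matrix.mulVec ((H j : Matrix (Fin n) (Fin n) ℝ)) (z i)) :
    g * n * d - Module.finrank ℝ (LinearMap.range Φ) = g * (d * (d - 1) / 2) := by
  obtain ⟨w, hw⟩ := exists_dual z hz
  let κ : Spairs d → Fin d := fun p => Fin.castLE p.1.isLt.le p.2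
  have hκ : ∀ p : Spairs d, (κ p : ℕ) < (p.1 : ℕ) := fun p => p.2.isLt
  let Ψ : (Fin g → Fin d → Fin n → ℝ) →ₗ[ℝ] (Fin g → Spairs d → ℝ) :=
    { toFun := fun y j p => z (κ p) ⬝ᵥ y j p.1 - z p.1 ⬝ᵥ y j (κ p)
      map_add' := by
        intro y y'
        funext j p
        simp only [Pi.add_apply, dotProduct_add]
        ring
      map_smul' := by
        intro c y
        funext j p
        simp only [Pi.smul_apply, dotProduct_smul, RingHom.id_apply, smul_eq_mul]
        ring }
  have hΨ : ∀ y j p, Ψ y j p = z (κ p) ⬝ᵥ y j p.1 - z p.1 ⬝ᵥ y j (κ p) := fun _ _ _ => rfl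
  -- range Φ = ker Ψ
  have hker : LinearMap.range Φ = LinearMap.ker Ψ := by
    apply le_antisymm
    · rintro _ ⟨H, rfl⟩
      rw [LinearMap.mem_ker]
      funext j p
      rw [hΨ, Pi.zero_apply, Pi.zero_apply]
      rw [hΦ, hΦ, symm_dot (H j).2, sub_self]
    · intro y hy
      have h0 : ∀ (j : Fin g) (p : Spairs d), z (κ p) ⬝ᵥ y j p.1 = z p.1 ⬝ᵥ y j (κ p) := by
        intro j p
        have := congrFun (congrFun (LinearMap.mem_ker.mp hy) j) p
        rw [hΨ, Pi.zero_apply, Pi.zero_apply] at this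
        linarith [this]
      have key : ∀ (j : Fin g) (i k : Fin d), z k ⬝ᵥ y j i = z i ⬝ᵥ y j k := by
        intro j i k
        rcases lt_trichotomy i k with h | h | h
        · have h2 := h0 j ⟨k, ⟨i.val, h⟩⟩
          have hκi : κ (⟨k, ⟨i.val, h⟩⟩ : Spairs d) = i := by
            apply Fin.ext; simp [κ]
          rw [hκi] at h2
          exact h2.symm
        · rw [h]
        · have h2 := h0 j ⟨i, ⟨k.val, h⟩⟩
          have hκk : κ (⟨i, ⟨k.val, h⟩⟩ : Spairs d) = k := by
            apply Fin.ext; simp [κ]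
          rw [hκk] at h2
          exact h2
      set M : Fin g → Matrix (Fin n) (Fin n) ℝ := fun j a b =>
        (∑ i, (y j i a * w i b + w i a * y j i b)) -
          ∑ i, ∑ k, (z k ⬝ᵥ y j i) * (w i a * w k b) with hM
      have hsymm : ∀ j, (M j).IsSymm := by
        intro j
        unfold Matrix.IsSymm
        ext a b
        rw [Matrix.transpose_apply]
        simp only [hM]
        congr 1
        · exact Finset.sum_congr rfl fun i _ => by ring
        · rw [Finset.sum_comm]
          refine Finset.sum_congr rfl fun i _ => Finset.sum_congr rfl fun k _ => ?_
          rw [key j i k]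
          ring
      have hmul : ∀ j m, M j *ᵥ z m = y j m := by
        intro j m
        funext a
        have e1 : (M j *ᵥ z m) a = ∑ b, M j a b * z m b := rfl
        rw [e1]
        simp only [hM, sub_mul, Finset.sum_sub_distrib]
        have eA : ∑ b, (∑ i, (y j i a * w i b + w i a * y j i b)) * z m b
            = ∑ i, (y j i a * (z m ⬝ᵥ w i) + w i a * (z m ⬝ᵥ y j i)) := by
          simp only [Finset.sum_mul]
          rw [Finset.sum_comm]
          refine Finset.sum_congr rfl fun i _ => ?_
          simp only [dotProduct, Finset.mul_sum, ← Finset.sum_add_distrib]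
          refine Finset.sum_congr rfl fun b _ => by ring
        have eB : ∑ b, (∑ i, ∑ k, (z k ⬝ᵥ y j i) * (w i a * w k b)) * z m b
            = ∑ i, (z m ⬝ᵥ y j i) * w i a := by
          simp only [Finset.sum_mul]
          rw [Finset.sum_comm]
          refine Finset.sum_congr rfl fun i _ => ?_
          have h3 : ∑ b, ∑ k, (z k ⬝ᵥ y j i) * (w i a * w k b) * z m b
              = ∑ k, (z k ⬝ᵥ y j i) * w i a * (z m ⬝ᵥ w k) := by
            rw [Finset.sum_comm]
            refine Finset.sum_congr rfl fun k _ => ?_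
            simp only [dotProduct, Finset.mul_sum]
            refine Finset.sum_congr rfl fun b _ => by ring
          rw [h3]
          simp only [hw, mul_ite, mul_one, mul_zero]
          rw [Finset.sum_ite_eq' Finset.univ m (fun k => (z k ⬝ᵥ y j i) * w i a)]
          simp [key j i m]
        rw [eA, eB]
        simp only [hw, mul_ite, mul_one, mul_zero]
        rw [Finset.sum_add_distrib,
          Finset.sum_ite_eq' Finset.univ m (fun i => y j i a)]
        simp only [Finset.mem_univ, if_true]
        have h4 : ∑ i, w i a * (z m ⬝ᵥ y j i) = ∑ i, (z m ⬝ᵥ y j i) * w i a :=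
          Finset.sum_congr rfl fun i _ => by ring
        rw [h4]
        ring
      refine ⟨fun j => ⟨M j, hsymm j⟩, ?_⟩
      funext j i
      rw [hΦ]
      exact hmul j i
  -- Ψ surjective
  have hsurj : Function.Surjective Ψ := by
    intro t
    classical
    set c : Fin g → Fin d → Fin d → ℝ := fun j i k =>
      if h : (k : ℕ) < (i : ℕ) then t j ⟨i, ⟨k, h⟩⟩ / 2
      else if h' : (i : ℕ) < (k : ℕ) then -(t j ⟨k, ⟨i, h'⟩⟩) / 2 else 0 with hc
    refine ⟨fun j i a => ∑ k, c j i k * w k a, ?_⟩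
    funext j p
    obtain ⟨i, m⟩ := p
    rw [hΨ]
    rw [dot_sum_mul, dot_sum_mul]
    simp only [hw, mul_ite, mul_one, mul_zero]
    rw [Finset.sum_ite_eq' Finset.univ _ (fun k => c j i k),
      Finset.sum_ite_eq' Finset.univ _ (fun k => c j (κ ⟨i, m⟩) k)]
    simp only [Finset.mem_univ, if_true]
    have hlt : ((κ (⟨i, m⟩ : Spairs d) : Fin d) : ℕ) < (i : ℕ) := m.isLt
    have hnlt : ¬ ((i : ℕ) < ((κ (⟨i, m⟩ : Spairs d) : Fin d) : ℕ)) := by omega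
    rw [hc]
    simp only [dif_pos hlt, dif_neg (by omega : ¬ ((κ (⟨i, m⟩ : Spairs d) : Fin d) : ℕ) < ((κ (⟨i, m⟩ : Spairs d) : Fin d) : ℕ))]
    rw [dif_neg hnlt]
    have hmm : (⟨(κ (⟨i, m⟩ : Spairs d) : Fin d).val, hlt⟩ : Fin i.val) = m := Fin.ext rfl
    rw [hmm]
    ring
  -- dimension count
  have hd1 : Module.finrank ℝ (Fin g → Fin d → Fin n → ℝ) = g * (d * n) := by
    rw [finrank_fun, finrank_fun, Module.finrank_pi, Fintype.card_fin, Fintype.card_fin,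
      Fintype.card_fin]
  have hd2 : Module.finrank ℝ (LinearMap.range Ψ) = g * (d * (d - 1) / 2) := by
    rw [LinearMap.range_eq_top.mpr hsurj, finrank_top, finrank_fun, Module.finrank_pi,
      card_Spairs, Fintype.card_fin]
  have hrn := LinearMap.finrank_range_add_finrank_ker Ψ
  rw [hd1, hd2] at hrn
  rw [hker]
  rw [show g * n * d = g * (d * n) by ring]
  omega
end

section
/- For every positive integer d there exists a nonzero noncommutative polynomial p in finitely many variables (with real coefficients) such that p vanishes identically when evaluated at every tuple of d×d real matrices. -/
open MultilinearMap

lemma freeMonoid_map_prod {α : Type*} (L : List α) :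
    (L.map FreeMonoid.of).prod = FreeMonoid.ofList L := by
  induction L with
  | nil => rfl
  | cons a t ih => rw [List.map_cons, List.prod_cons, ih, FreeMonoid.ofList_cons]

/-- For every `d ≥ 1` there is a nonzero noncommutative polynomial vanishing
identically on all tuples of `d × d` real matrices. -/
theorem exists_polynomial_identity (d : ℕ) (hd : 0 < d) :
    ∃ (g : ℕ) (p : FreeAlgebra ℝ (Fin g)), p ≠ 0 ∧
      ∀ X : Fin g → Matrix (Fin d) (Fin d) ℝ,
        (FreeAlgebra.lift ℝ X) p = 0 := by
  classical
  obtain ⟨n, hn1, hn⟩ : ∃ n0 > 1, ∀ n ≥ n0, (d ^ 4) ^ n < (n - 1).factorial := by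
    obtain ⟨N, hN⟩ := Filter.eventually_atTop.mp (Nat.eventually_pow_lt_factorial_sub (d ^ 4) 1)
    exact ⟨N + 2, by omega, fun n hn => hN n (by omega)⟩
  have key : (d ^ 2) ^ (n + 1) < n.factorial := by
    calc (d ^ 2) ^ (n + 1) = d ^ (2 * (n + 1)) := by rw [← pow_mul]
    _ ≤ d ^ (4 * n) := Nat.pow_le_pow_right hd (by omega)
    _ = (d ^ 4) ^ n := by rw [← pow_mul]
    _ < (n - 1).factorial := hn n le_rfl
    _ ≤ n.factorial := Nat.factorial_le (Nat.sub_le n 1)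
  let M := Matrix (Fin d) (Fin d) ℝ
  let B := Matrix.stdBasis ℝ (Fin d) (Fin d)
  -- the multilinear map attached to coefficients c
  let F : (Equiv.Perm (Fin n) → ℝ) → MultilinearMap ℝ (fun _ : Fin n => M) M :=
    fun c => ∑ σ : Equiv.Perm (Fin n),
      c σ • (MultilinearMap.mkPiAlgebraFin ℝ n M).domDomCongr σ
  have hF : ∀ c (X : Fin n → M),
      F c X = ∑ σ : Equiv.Perm (Fin n), c σ • (List.ofFn fun i => X (σ i)).prod := by
    intro c X
    simp [F, MultilinearMap.sum_apply]
  -- linear map from coefficients to values on basis tuples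
  let T : (Equiv.Perm (Fin n) → ℝ) →ₗ[ℝ] ((Fin n → Fin d × Fin d) → M) :=
    { toFun := fun c v => F c (fun i => B (v i))
      map_add' := by
        intro c c'
        funext v
        simp only [hF, Pi.add_apply]
        rw [← Finset.sum_add_distrib]
        exact Finset.sum_congr rfl fun σ _ => by rw [add_smul]
      map_smul' := by
        intro r c
        funext v
        simp only [hF, Pi.smul_apply, RingHom.id_apply, Finset.smul_sum, smul_smul,
          smul_eq_mul] }
  have hTker : ∃ c, c ≠ 0 ∧ T c = 0 := by
    by_contra h
    push_neg at h
    have hinj : Function.Injective T :=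
      (injective_iff_map_eq_zero T).mpr fun a ha => by
        by_contra h0; exact h a h0 ha
    have hle := LinearMap.finrank_le_finrank_of_injective hinj
    have h1 : Module.finrank ℝ (Equiv.Perm (Fin n) → ℝ) = n.factorial := by
      rw [Module.finrank_fintype_fun_eq_card, Fintype.card_perm, Fintype.card_fin]
    have hMr : Module.finrank ℝ M = d * d := by
      simpa using Module.finrank_matrix (R := ℝ) (M := ℝ) (Fin d) (Fin d)
    have h2 : Module.finrank ℝ ((Fin n → Fin d × Fin d) → M) = (d ^ 2) ^ n * d ^ 2 := by
      rw [Module.finrank_pi_fintype, Finset.sum_const, Finset.card_univ, Fintype.card_fun, hMr]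
      simp only [Fintype.card_prod, Fintype.card_fin, smul_eq_mul]
      ring
    rw [h1, h2] at hle
    rw [pow_succ] at key
    omega
  obtain ⟨c, hc0, hcT⟩ := hTker
  refine ⟨n, ∑ σ : Equiv.Perm (Fin n), c σ • (List.ofFn fun i => FreeAlgebra.ι ℝ (σ i)).prod,
    ?_, ?_⟩
  · -- nonzero
    intro hp0
    obtain ⟨σ₀, hσ₀⟩ := Function.ne_iff.mp hc0
    have he : (FreeAlgebra.equivMonoidAlgebraFreeMonoid : FreeAlgebra ℝ (Fin n) ≃ₐ[ℝ] MonoidAlgebra ℝ (FreeMonoid (Fin n)))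
        (∑ σ : Equiv.Perm (Fin n), c σ • (List.ofFn fun i => FreeAlgebra.ι ℝ (σ i)).prod)
        = ∑ σ : Equiv.Perm (Fin n),
            c σ • MonoidAlgebra.single (FreeMonoid.ofList (List.ofFn σ)) (1 : ℝ) := by
      rw [_root_.map_sum]
      refine Finset.sum_congr rfl fun σ _ => ?_
      rw [map_smul, map_list_prod]
      congr 1
      have : ∀ x : Fin n, (FreeAlgebra.equivMonoidAlgebraFreeMonoid : FreeAlgebra ℝ (Fin n) ≃ₐ[ℝ] MonoidAlgebra ℝ (FreeMonoid (Fin n)))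
          (FreeAlgebra.ι ℝ x) = MonoidAlgebra.of ℝ (FreeMonoid (Fin n)) (FreeMonoid.of x) := by
        intro x
        simp [FreeAlgebra.equivMonoidAlgebraFreeMonoid, FreeAlgebra.lift_ι_apply]
      rw [List.map_ofFn]
      calc (List.ofFn (((FreeAlgebra.equivMonoidAlgebraFreeMonoid : FreeAlgebra ℝ (Fin n) ≃ₐ[ℝ] MonoidAlgebra ℝ (FreeMonoid (Fin n))) : FreeAlgebra ℝ (Fin n) → MonoidAlgebra ℝ (FreeMonoid (Fin n))) ∘ fun i => FreeAlgebra.ι ℝ (σ i))).prod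
          = (List.ofFn fun i => MonoidAlgebra.of ℝ (FreeMonoid (Fin n)) (FreeMonoid.of (σ i))).prod := by
            exact congrArg List.prod (congrArg List.ofFn (funext fun i => this (σ i)))
        _ = MonoidAlgebra.of ℝ (FreeMonoid (Fin n)) ((List.ofFn fun i => FreeMonoid.of (σ i)).prod) := by
            rw [map_list_prod, List.map_ofFn]
            rfl
        _ = MonoidAlgebra.single (FreeMonoid.ofList (List.ofFn σ)) 1 := by
            rw [show (List.ofFn fun i => FreeMonoid.of (σ i))
                = (List.ofFn σ).map FreeMonoid.of by rw [List.map_ofFn]; rfl,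
              freeMonoid_map_prod]
            rfl
    rw [hp0, _root_.map_zero] at he
    have happ := congrArg (fun x : MonoidAlgebra ℝ (FreeMonoid (Fin n)) =>
      x.coeff (FreeMonoid.ofList (List.ofFn ⇑σ₀))) he.symm
    simp only [MonoidAlgebra.coeff_sum, MonoidAlgebra.coeff_smul, MonoidAlgebra.coeff_single,
      MonoidAlgebra.coeff_zero] at happ
    rw [Finsupp.finset_sum_apply] at happ
    have hz : ∀ σ ∈ (Finset.univ : Finset (Equiv.Perm (Fin n))), σ ≠ σ₀ →
        (c σ • Finsupp.single (FreeMonoid.ofList (List.ofFn ⇑σ)) (1 : ℝ))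
          (FreeMonoid.ofList (List.ofFn ⇑σ₀)) = 0 := by
      intro σ _ hne
      rw [Finsupp.smul_apply, Finsupp.single_apply, if_neg, smul_zero]
      intro hw
      exact hne (Equiv.coe_fn_injective (List.ofFn_injective
        (FreeMonoid.ofList.injective hw)))
    rw [Finset.sum_eq_single_of_mem σ₀ (Finset.mem_univ σ₀) hz, Finsupp.smul_apply,
      Finsupp.single_apply, if_pos rfl] at happ
    simp only [smul_eq_mul, mul_one, Finsupp.coe_zero, Pi.zero_apply] at happ
    exact hσ₀ happ
  · -- vanishing
    intro X
    have hFc : F c = 0 := by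
      refine Module.Basis.ext_multilinear (fun _ => B) fun v => ?_
      have := congrFun hcT v
      exact this
    rw [_root_.map_sum]
    have : ∀ σ : Equiv.Perm (Fin n),
        (FreeAlgebra.lift ℝ X) (c σ • (List.ofFn fun i => FreeAlgebra.ι ℝ (σ i)).prod)
        = c σ • (List.ofFn fun i => X (σ i)).prod := by
      intro σ
      rw [map_smul, map_list_prod, List.map_ofFn]
      exact congrArg _ (congrArg List.prod (congrArg List.ofFn
        (funext fun i => FreeAlgebra.lift_ι_apply X (σ i))))
    rw [Finset.sum_congr rfl fun σ _ => this σ, ← hF c X, hFc]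
    rfl
end

section
/- A nonzero multilinear noncommutative polynomial of degree n, q(x₁,…,x_n) = Σ_{π ∈ Sym_n} α_π x_{π(1)}⋯x_{π(n)} with not all α_π zero, cannot vanish on all tuples of n×n real matrices: there exist n×n matrices X₁,…,X_n with q(X₁,…,X_n) ≠ 0. In fact one may take the staircase matrix units X₁ = E_{1,1}, X₂ = E_{1,2}, X₃ = E_{2,2}, X₄ = E_{2,3}, … (alternating E_{k,k} and E_{k,k+1}) composed with a suitable permutation of indices. -/
open Matrix

section Aux

variable {n : ℕ}

/-- Row index of the `j`-th staircase matrix unit. -/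
def rr (j : Fin n) : Fin n := ⟨j.val / 2, lt_of_le_of_lt (Nat.div_le_self _ _) j.isLt⟩

/-- Column index of the `j`-th staircase matrix unit. -/
def cc (j : Fin n) : Fin n := ⟨(j.val + 1) / 2, by have := j.isLt; omega⟩

/-- The staircase matrix units `E_{1,1}, E_{1,2}, E_{2,2}, E_{2,3}, …`. -/
noncomputable def EE (j : Fin n) : Matrix (Fin n) (Fin n) ℝ :=
  single (rr j) (cc j) 1

lemma chain_lt {a b : Fin n} (hab : a ≠ b) (h : cc a = rr b) : a < b := by
  have h' : (a.val + 1) / 2 = b.val / 2 := congrArg Fin.val h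
  have hab' : a.val ≠ b.val := fun hh => hab (Fin.ext hh)
  have : a.val < b.val := by omega
  exact this

open Classical in
lemma prod_map_EE (a : Fin n) (L : List (Fin n)) :
    ((a :: L).map EE).prod =
      if List.Chain' (fun x y => cc x = rr y) (a :: L)
      then single (rr a) (cc ((a :: L).getLast (List.cons_ne_nil a L))) 1
      else 0 := by
  induction L generalizing a with
  | nil => simp [EE, List.Chain']
  | cons b L ih =>
    rw [List.map_cons, List.prod_cons, ih b]
    by_cases h1 : List.Chain' (fun x y => cc x = rr y) (b :: L)
    · by_cases h2 : cc a = rr b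
      · have hc : List.Chain' (fun x y => cc x = rr y) (a :: b :: L) :=
          List.isChain_cons_cons.mpr ⟨h2, h1⟩
        rw [if_pos h1, if_pos hc, EE, h2, Matrix.single_mul_single_same, one_mul,
          List.getLast_cons_cons]
      · have hc : ¬ List.Chain' (fun x y => cc x = rr y) (a :: b :: L) :=
          fun hc => h2 (List.isChain_cons_cons.mp hc).1
        rw [if_pos h1, if_neg hc, EE, Matrix.single_mul_single_of_ne (h := h2)]
    · have hc : ¬ List.Chain' (fun x y => cc x = rr y) (a :: b :: L) :=
        fun hc => h1 (List.isChain_cons_cons.mp hc).2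
      rw [if_neg h1, if_neg hc, mul_zero]

open Classical in
lemma prod_map_EE' (L : List (Fin n)) (h : L ≠ []) :
    (L.map EE).prod =
      if List.Chain' (fun x y => cc x = rr y) L
      then single (rr (L.head h)) (cc (L.getLast h)) 1
      else 0 := by
  cases L with
  | nil => exact absurd rfl h
  | cons a L => exact prod_map_EE a L

lemma perm_eq_one_of_strictMono (τ : Equiv.Perm (Fin n)) (h : StrictMono τ) : τ = 1 := by
  have hsymm : StrictMono (τ.symm : Fin n → Fin n) := by
    intro a b hab
    by_contra hc
    push_neg at hc
    rcases lt_or_eq_of_le hc with hlt | heq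
    · exact absurd (h hlt) (by simp [not_lt.mpr hab.le])
    · exact absurd (congrArg τ heq) (by simp [hab.ne'])
  have inst : WellFoundedLT (Fin n) := inferInstance
  ext i
  have ha : τ i ≤ i := by simpa using hsymm.le_apply (x := τ i)
  have hb : i ≤ τ i := h.le_apply
  simpa using congrArg Fin.val (le_antisymm ha hb)

lemma chain_ofFn_iff (τ : Equiv.Perm (Fin n)) (hn : 0 < n) :
    List.Chain' (fun x y => cc x = rr y) (List.ofFn τ) ↔ τ = 1 := by
  rw [List.Chain', List.isChain_ofFn]
  constructor
  · intro h
    apply perm_eq_one_of_strictMono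
    obtain ⟨m, rfl⟩ := Nat.exists_eq_succ_of_ne_zero hn.ne'
    rw [Fin.strictMono_iff_lt_succ]
    intro i
    have hi : (i : ℕ) + 1 < m + 1 := by omega
    have hcc := h i hi
    have hne : τ ⟨i, by omega⟩ ≠ τ ⟨i + 1, hi⟩ := by
      intro hc
      have := τ.injective hc
      simp only [Fin.mk.injEq] at this
      omega
    have hlt := chain_lt hne hcc
    have e1 : (⟨(i : ℕ), by omega⟩ : Fin (m + 1)) = i.castSucc := rfl
    have e2 : (⟨(i : ℕ) + 1, hi⟩ : Fin (m + 1)) = i.succ := rfl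
    rwa [e1, e2] at hlt
  · rintro rfl i hi
    apply Fin.ext
    simp [cc, rr]

/-- A nonzero multilinear noncommutative polynomial of degree `n` does not vanish on
all tuples of `n × n` real matrices. -/
theorem multilinear_not_identity (n : ℕ) (hn : 0 < n)
    (α : Equiv.Perm (Fin n) → ℝ) (hα : α ≠ 0) :
    ∃ X : Fin n → Matrix (Fin n) (Fin n) ℝ,
      (∑ π : Equiv.Perm (Fin n),
        α π • (List.ofFn fun i : Fin n => X (π i)).prod) ≠ 0 := by
  classical
  obtain ⟨σ, hσ⟩ := Function.ne_iff.mp hα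
  refine ⟨fun j => EE (σ⁻¹ j), ?_⟩
  set M : Matrix (Fin n) (Fin n) ℝ :=
    single (rr (⟨0, hn⟩ : Fin n)) (cc (⟨n - 1, by omega⟩ : Fin n)) 1 with hM
  have key : ∀ π : Equiv.Perm (Fin n),
      (List.ofFn fun i : Fin n => EE (σ⁻¹ (π i))).prod = if π = σ then M else 0 := by
    intro π
    obtain ⟨τ, hτ⟩ : ∃ τ : Equiv.Perm (Fin n), τ = σ⁻¹ * π := ⟨_, rfl⟩
    have hofn : (List.ofFn fun i : Fin n => EE (σ⁻¹ (π i)))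
        = (List.ofFn fun i => τ i).map EE := by
      rw [List.map_ofFn]; subst hτ; rfl
    have hτne : (List.ofFn fun i : Fin n => τ i) ≠ [] := by
      simp [List.ofFn_eq_nil_iff, hn.ne']
    rw [hofn, prod_map_EE' _ hτne]
    have hπσ : τ = 1 ↔ π = σ := by
      constructor
      · intro h; have := congrArg (σ * ·) h; simpa [hτ, mul_assoc] using this
      · rintro rfl; simp [hτ]
    have hchain := (chain_ofFn_iff τ hn).trans hπσ
    by_cases hcase : π = σ
    · have hτ1 : τ = 1 := hπσ.mpr hcase
      rw [if_pos (hchain.mpr hcase), if_pos hcase, List.head_ofFn, List.getLast_ofFn]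
      subst hτ1
      rfl
    · rw [if_neg (fun h => hcase (hchain.mp h)), if_neg hcase]
  have hsum : (∑ π : Equiv.Perm (Fin n),
      α π • (List.ofFn fun i : Fin n => EE (σ⁻¹ (π i))).prod) = α σ • M := by
    rw [Finset.sum_congr rfl (fun π _ => by rw [key π])]
    simp [Finset.sum_ite_eq', smul_ite]
  rw [hsum]
  intro hcontra
  have h2 := congrFun (congrFun hcontra (rr (⟨0, hn⟩ : Fin n))) (cc (⟨n - 1, by omega⟩ : Fin n))
  simp [hM] at h2
  exact hσ h2

end Aux
end

section
/- Let A, D be real symmetric matrices, r and c real matrices of appropriate sizes with c square and invertible, and set T = [[T₀,0],[0,0]] and R = C·Cᵀ where C = [[r],[c]] (stacked). If for every δ > 0 there exists η > 0 such that T + δI + λR ⪰ 0 for all λ > η, then T₀ ⪰ 0. -/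
open scoped Matrix

theorem psd_limit_lemma (k m : ℕ)
    (T₀ : Matrix (Fin k) (Fin k) ℝ) (hT₀ : T₀.IsSymm)
    (r : Matrix (Fin k) (Fin m) ℝ) (c : Matrix (Fin m) (Fin m) ℝ)
    (hc : IsUnit c)
    (C : Matrix (Fin k ⊕ Fin m) (Fin m) ℝ) (hC : C = Matrix.fromRows r c)
    (R T : Matrix (Fin k ⊕ Fin m) (Fin k ⊕ Fin m) ℝ)
    (hR : R = C * C.transpose)
    (hT : T = Matrix.fromBlocks T₀ 0 0 (0 : Matrix (Fin m) (Fin m) ℝ))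
    (h : ∀ δ : ℝ, 0 < δ → ∃ η : ℝ, 0 < η ∧ ∀ lam : ℝ, η < lam →
      (T + δ • (1 : Matrix (Fin k ⊕ Fin m) (Fin k ⊕ Fin m) ℝ) + lam • R).PosSemidef) :
    T₀.PosSemidef := by
  rw [Matrix.posSemidef_iff_dotProduct_mulVec]
  constructor
  · rwa [Matrix.IsHermitian, Matrix.conjTranspose_eq_transpose_of_trivial]
  intro x
  -- choose y with cᵀ *ᵥ y = -(rᵀ *ᵥ x)
  have hdet : IsUnit c.transpose.det := by
    rw [Matrix.det_transpose]
    exact (Matrix.isUnit_iff_isUnit_det c).mp hc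
  set y : Fin m → ℝ := (c.transpose)⁻¹ *ᵥ (-(r.transpose *ᵥ x)) with hy
  set v : Fin k ⊕ Fin m → ℝ := Sum.elim x y with hv
  have hCv : C.transpose *ᵥ v = 0 := by
    rw [hC, Matrix.transpose_fromRows, hv, Matrix.fromCols_mulVec_sumElim, hy,
      Matrix.mulVec_mulVec, Matrix.mul_nonsing_inv _ hdet, Matrix.one_mulVec]
    simp
  have hRv : v ⬝ᵥ (R *ᵥ v) = 0 := by
    rw [hR, ← Matrix.mulVec_mulVec, Matrix.dotProduct_mulVec, ← Matrix.mulVec_transpose, hCv]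
    simp
  have hTv : v ⬝ᵥ (T *ᵥ v) = x ⬝ᵥ (T₀ *ᵥ x) := by
    rw [hT, hv, Matrix.fromBlocks_mulVec]
    simp [dotProduct]
  -- main estimate
  have key : ∀ δ : ℝ, 0 < δ → 0 ≤ x ⬝ᵥ (T₀ *ᵥ x) + δ * (v ⬝ᵥ v) := by
    intro δ hδ
    obtain ⟨η, hη, hall⟩ := h δ hδ
    have hps := (Matrix.posSemidef_iff_dotProduct_mulVec.mp (hall (η + 1) (by linarith))).2 v
    simp only [star_trivial] at hps
    rw [Matrix.add_mulVec, Matrix.add_mulVec, dotProduct_add, dotProduct_add,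
      Matrix.smul_mulVec, Matrix.smul_mulVec, dotProduct_smul,
      dotProduct_smul, Matrix.one_mulVec, hTv, hRv] at hps
    simpa using hps
  have hvv : 0 ≤ v ⬝ᵥ v := by
    apply Finset.sum_nonneg
    intro i _
    exact mul_self_nonneg _
  by_contra hneg
  push_neg at hneg
  simp only [star_trivial] at hneg
  set q := x ⬝ᵥ (T₀ *ᵥ x)
  have := key (-q / (v ⬝ᵥ v + 1)) (div_pos (by linarith) (by linarith))
  have h1 : (-q / (v ⬝ᵥ v + 1)) * (v ⬝ᵥ v) < -q := by
    rw [div_mul_eq_mul_div, div_lt_iff₀ (by linarith)]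
    nlinarith
  linarith
end
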